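/- Let d be a positive integer with d ≤ e^{−3/2}(p−1) for some integer p ≥ 2, and let n > d + 1. Then EDKhi(d+1, n−d−1, [binom(p−1,d)·(d+1)^2]^{−1}) ≥ d + 1, where EDKhi(a,b,·) is the inverse in x of DKhi(a,b,x) = (1/a)·E[(X_a − x·X'_b/b)_+] for independent chi-squared variables X_a, X'_b. -/

import Mathlib

open MeasureTheory ProbabilityTheory Real

/-- The chi-squared distribution with `k` degrees of freedom, as the
Gamma distribution with shape `k/2` and rate `1/2`. -/
noncomputable def chiSqMeasure (k : ℕ) : Measure ℝ :=
  gammaMeasure ((k : ℝ) / 2) (1 / 2)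

/-!
Let `X ~ χ²_{d+1}` and `Y ~ χ²_{n-d-1}` be independent and `A = d + 1`. On the event
`X ≥ 2A` the integrand is at least `2A - x Y / (n-d-1)`, whose mean over `Y` is `2A - x`; hence
`P(X ≥ 2A) (2A - x) ≤ ∫ … = A / (binom(p-1,d) A²)`. Bounding the Gamma density below by an
exponential one on `[2A, ∞)` and using `Γ(s) ≤ s^(s-1)` gives `P(X ≥ 2A) ≥ e^{-A}`, while
`binom(p-1,d) ≥ ((p-d)/d)^d ≥ e^d` gives `1 / (binom(p-1,d) A²) ≤ e^{-A}`. Together they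
force `2A - x ≤ A`.
-/

open Set

namespace Real

theorem Gamma_le_one_of_mem_Icc {s : ℝ} (hs : s ∈ Icc (1 : ℝ) 2) : Gamma s ≤ 1 := by
  have h := convexOn_Gamma.2 (mem_Ioi.mpr one_pos) (mem_Ioi.mpr two_pos)
    (sub_nonneg.2 hs.2) (sub_nonneg.2 hs.1) (by ring : (2 - s) + (s - 1) = 1)
  simp only [smul_eq_mul, Gamma_one, Gamma_two] at h
  rw [show (2 - s) * 1 + (s - 1) * 2 = s by ring] at h
  linarith

theorem Gamma_le_rpow_sub_one {s : ℝ} (hs : 1 ≤ s) : Gamma s ≤ s ^ (s - 1) := by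
  obtain ⟨n, hn⟩ := exists_nat_ge s
  induction n generalizing s with
  | zero => simp at hn; linarith
  | succ n ih =>
    rcases le_or_gt s 2 with h2 | h2
    · exact (Gamma_le_one_of_mem_Icc ⟨hs, h2⟩).trans (one_le_rpow hs (by linarith))
    have hs1 : s - 1 ≠ 0 := by linarith
    calc Gamma s = (s - 1) * Gamma (s - 1) := by
          rw [← Gamma_add_one hs1, sub_add_cancel]
      _ ≤ (s - 1) * (s - 1) ^ (s - 1 - 1) := by
          have : 0 ≤ s - 1 := by linarith
          gcongr
          exact ih (by linarith) (by push_cast at hn; linarith)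
      _ = (s - 1) ^ (s - 1) := by rw [mul_comm, ← rpow_add_one hs1, sub_add_cancel]
      _ ≤ s ^ (s - 1) := by gcongr; linarith

end Real

namespace Nat

variable {α : Type*} [Semifield α] [LinearOrder α] [IsStrictOrderedRing α]

theorem div_pow_le_choose (n k : ℕ) : (((n + 1 - k : ℕ) : α) / k) ^ k ≤ n.choose k := by
  rw [div_pow]
  refine le_trans ?_ (pow_le_choose k n)
  gcongr
  exact_mod_cast k.factorial_le_pow

end Nat

theorem exp_add_one_le_exp_three_halves : exp 1 + 1 ≤ exp (3 / 2) := by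
  have h : 3 / 2 ≤ exp (1 / 2) := by linarith [add_one_le_exp (1 / 2 : ℝ)]
  have : exp (3 / 2) = exp 1 * exp (1 / 2) := by rw [← exp_add]; norm_num
  nlinarith [exp_one_lt_d9, exp_one_gt_d9]

theorem exp_le_choose {m d : ℕ} (hd : 0 < d) (h : exp (3 / 2) * d ≤ m) :
    exp d ≤ m.choose d := by
  have hd' : (0 : ℝ) < d := by exact_mod_cast hd
  have hdm : d ≤ m := by
    have : (d : ℝ) ≤ m := by nlinarith [add_one_le_exp (3 / 2 : ℝ)]
    exact_mod_cast this
  have he : exp 1 ≤ ((m + 1 - d : ℕ) : ℝ) / d := by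
    rw [le_div_iff₀ hd', Nat.cast_sub (by omega)]
    push_cast
    nlinarith [exp_add_one_le_exp_three_halves]
  calc exp d = exp 1 ^ d := by rw [← exp_nat_mul, mul_one]
    _ ≤ (((m + 1 - d : ℕ) : ℝ) / d) ^ d := by gcongr
    _ ≤ m.choose d := Nat.div_pow_le_choose m d

theorem inv_choose_mul_sq_le_exp_neg {p d : ℕ} (hd : 0 < d)
    (hdp : (d : ℝ) ≤ exp (-(3 / 2)) * ((p : ℝ) - 1)) :
    (((p - 1).choose d : ℝ) * ((d : ℝ) + 1) ^ 2)⁻¹ ≤ exp (-(d + 1)) := by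
  have hp : exp (3 / 2) * d ≤ (p : ℝ) - 1 := by
    calc exp (3 / 2) * d ≤ exp (3 / 2) * (exp (-(3 / 2)) * (p - 1)) := by gcongr
      _ = p - 1 := by rw [← mul_assoc, ← exp_add]; simp
  have hp1 : 1 ≤ p := by
    have : (0 : ℝ) < exp (3 / 2) * d := by positivity
    exact_mod_cast (by linarith : (1 : ℝ) ≤ p)
  have hC := exp_le_choose hd (m := p - 1) (by rwa [Nat.cast_sub hp1, Nat.cast_one])
  have hd1 : (2 : ℝ) ≤ d + 1 := by norm_cast; omega
  rw [exp_neg]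
  refine inv_anti₀ (exp_pos _) ?_
  calc exp ((d : ℝ) + 1) = exp d * exp 1 := exp_add _ _
    _ ≤ (p - 1).choose d * 2 ^ 2 := by gcongr; linarith [exp_one_lt_d9]
    _ ≤ _ := by gcongr

namespace ProbabilityTheory

theorem integral_id_gammaMeasure {a r : ℝ} (ha : 0 < a) (hr : 0 < r) :
    ∫ t, t ∂gammaMeasure a r = a / r := by
  have hpdf (t : ℝ) : (gammaPDF a r t).toReal = gammaPDFReal a r t :=
    ENNReal.toReal_ofReal (gammaPDFReal_nonneg ha hr t)
  have hsupp : ∀ t ∉ Ioi (0 : ℝ), gammaPDFReal a r t * t = 0 := by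
    intro t ht
    rcases (not_lt.1 (mem_Ioi.not.1 ht)).lt_or_eq with ht | rfl
    · simp [gammaPDFReal, not_le.2 ht]
    · exact mul_zero _
  have hdens : EqOn (fun t ↦ gammaPDFReal a r t * t)
      (fun t ↦ r ^ a / Gamma a * (t ^ (a + 1 - 1) * exp (-(r * t)))) (Ioi 0) := by
    intro t (ht : 0 < t)
    simp only [gammaPDFReal, if_pos ht.le, add_sub_cancel_right, rpow_sub_one ht.ne']
    field_simp
  rw [gammaMeasure, integral_withDensity_eq_integral_toReal_smul
    (f := gammaPDF a r) (measurable_gammaPDFReal a r).ennreal_ofReal]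
  simp_rw [hpdf, smul_eq_mul]
  rw [← setIntegral_eq_integral_of_forall_compl_eq_zero hsupp,
    setIntegral_congr_fun measurableSet_Ioi hdens, integral_const_mul,
    integral_rpow_mul_exp_neg_mul_Ioi (by linarith) hr, Gamma_add_one ha.ne',
    rpow_add_one (by positivity), div_rpow zero_le_one hr.le, one_rpow]
  · have := Gamma_pos_of_pos ha
    have := rpow_pos_of_pos hr a
    field_simp
  · exact ae_of_all _ fun t ↦ ENNReal.ofReal_lt_top

theorem integrable_id_gammaMeasure {a r : ℝ} (ha : 0 < a) (hr : 0 < r) :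
    Integrable (fun t ↦ t) (gammaMeasure a r) :=
  Integrable.of_integral_ne_zero <| by
    rw [integral_id_gammaMeasure ha hr]; positivity

theorem le_toReal_gammaMeasure_Ici {a r c : ℝ} (ha : 1 ≤ a) (hr : 0 < r) (hc : 0 ≤ c) :
    (r * c) ^ (a - 1) * exp (-(r * c)) / Gamma a ≤ (gammaMeasure a r (Ici c)).toReal := by
  have hΓ := Gamma_pos_of_pos (by linarith : 0 < a)
  have := isProbabilityMeasure_gammaMeasure (by linarith : 0 < a) hr
  have hint : (r * c) ^ (a - 1) * exp (-(r * c)) / Gamma a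
      = ∫ t in Ioi c, r ^ a / Gamma a * c ^ (a - 1) * exp (-r * t) := by
    rw [integral_const_mul, integral_exp_mul_Ioi (neg_lt_zero.2 hr), mul_rpow hr.le hc,
      rpow_sub_one hr.ne']
    field_simp
  rw [hint, ← ENNReal.ofReal_le_iff_le_toReal (measure_ne_top _ _),
    ofReal_integral_eq_lintegral_ofReal
      ((integrableOn_exp_mul_Ioi (neg_lt_zero.2 hr) c).const_mul _)
      (ae_of_all _ fun t ↦ by positivity)]
  calc ∫⁻ t in Ioi c, ENNReal.ofReal (r ^ a / Gamma a * c ^ (a - 1) * exp (-r * t))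
      ≤ ∫⁻ t in Ioi c, gammaPDF a r t := by
        refine setLIntegral_mono' measurableSet_Ioi fun t (ht : c < t) ↦ ?_
        rw [gammaPDF_of_nonneg (hc.trans ht.le), neg_mul]
        gcongr
    _ = gammaMeasure a r (Ioi c) := (withDensity_apply _ measurableSet_Ioi).symm
    _ ≤ gammaMeasure a r (Ici c) := measure_mono Ioi_subset_Ici_self

theorem toReal_measure_Ici_mul_le_integral_max_sub (μ ν : Measure ℝ) [IsFiniteMeasure μ]
    [IsProbabilityMeasure ν] (hμ : Integrable (fun t ↦ t) μ) (hν : Integrable (fun t ↦ t) ν)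
    (t c : ℝ) :
    (μ (Ici t)).toReal * (t - c * ∫ y, y ∂ν) ≤ ∫ q, max (q.1 - c * q.2) 0 ∂μ.prod ν := by
  have hF : Integrable ((Ici t).indicator (1 : ℝ → ℝ)) μ :=
    (integrable_const 1).indicator measurableSet_Ici
  have hG : Integrable (fun y ↦ t - c * y) ν := (integrable_const t).sub (hν.const_mul c)
  calc (μ (Ici t)).toReal * (t - c * ∫ y, y ∂ν)
      = ∫ q, (Ici t).indicator 1 q.1 * (t - c * q.2) ∂μ.prod ν := by
        rw [integral_prod_mul (f := (Ici t).indicator 1) (g := fun y ↦ t - c * y),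
          integral_indicator_one measurableSet_Ici,
          integral_sub (integrable_const t) (hν.const_mul c), integral_const, integral_const_mul]
        simp [measureReal_def]
    _ ≤ ∫ q, max (q.1 - c * q.2) 0 ∂μ.prod ν := by
      refine integral_mono (hF.mul_prod hG)
        ((hμ.comp_fst ν).sub ((hν.comp_snd μ).const_mul c)).pos_part fun q ↦ ?_
      by_cases hq : q.1 ∈ Ici t
      · rw [indicator_of_mem hq, Pi.one_apply, one_mul]
        exact le_max_of_le_left (by linarith [mem_Ici.1 hq])
      · rw [indicator_of_notMem hq, zero_mul]
        exact le_max_right _ _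

end ProbabilityTheory

section ChiSquared

variable {k : ℕ}

theorem isProbabilityMeasure_chiSqMeasure (hk : 0 < k) : IsProbabilityMeasure (chiSqMeasure k) :=
  isProbabilityMeasure_gammaMeasure (by positivity) one_half_pos

theorem integral_id_chiSqMeasure (hk : 0 < k) : ∫ t, t ∂chiSqMeasure k = k := by
  rw [chiSqMeasure, integral_id_gammaMeasure (by positivity) one_half_pos]
  ring

theorem integrable_id_chiSqMeasure (hk : 0 < k) : Integrable (fun t ↦ t) (chiSqMeasure k) :=
  integrable_id_gammaMeasure (by positivity) one_half_pos

theorem exp_neg_le_chiSqMeasure_Ici (hk : 2 ≤ k) :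
    exp (-k) ≤ (chiSqMeasure k (Ici (2 * k))).toReal := by
  have ha : (1 : ℝ) ≤ k / 2 := by rw [le_div_iff₀ two_pos]; exact_mod_cast hk
  calc exp (-k) ≤ 2 ^ ((k : ℝ) / 2 - 1) * exp (-k) :=
        le_mul_of_one_le_left (exp_nonneg _) (one_le_rpow one_le_two (by linarith))
    _ = (k : ℝ) ^ ((k : ℝ) / 2 - 1) * exp (-k) / (k / 2) ^ ((k : ℝ) / 2 - 1) := by
        rw [mul_div_right_comm, ← div_rpow (by positivity) (by positivity),
          div_div_cancel₀ (by positivity)]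
    _ ≤ (k : ℝ) ^ ((k : ℝ) / 2 - 1) * exp (-k) / Gamma (k / 2) := by
        gcongr
        exact Gamma_le_rpow_sub_one ha
    _ = (1 / 2 * (2 * k)) ^ ((k : ℝ) / 2 - 1) * exp (-(1 / 2 * (2 * k))) / Gamma (k / 2) := by
        ring_nf
    _ ≤ (chiSqMeasure k (Ici (2 * k))).toReal :=
        le_toReal_gammaMeasure_Ici ha one_half_pos (by positivity)

end ChiSquared

theorem EDKhi_geq_general (p d n : ℕ) (hd : 0 < d)
    (hdp : (d : ℝ) ≤ Real.exp (-(3 / 2)) * ((p : ℝ) - 1)) (hn : d + 1 < n)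
    (x : ℝ)
    (hinv : (1 / ((d : ℝ) + 1)) *
        (∫ q : ℝ × ℝ, max (q.1 - x * q.2 / ((n : ℝ) - (d : ℝ) - 1)) 0
          ∂((chiSqMeasure (d + 1)).prod (chiSqMeasure (n - d - 1)))) =
      ((Nat.choose (p - 1) d : ℝ) * ((d : ℝ) + 1) ^ 2)⁻¹) :
    x ≥ (d : ℝ) + 1 := by
  have hk : 0 < n - d - 1 := by omega
  have hB : ((n - d - 1 : ℕ) : ℝ) = (n : ℝ) - d - 1 := by
    rw [Nat.cast_sub (by omega), Nat.cast_sub (by omega), Nat.cast_one]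
  have := isProbabilityMeasure_chiSqMeasure hk
  have := isProbabilityMeasure_chiSqMeasure (by omega : 0 < d + 1)
  have hlower := toReal_measure_Ici_mul_le_integral_max_sub _ _
    (integrable_id_chiSqMeasure (by omega : 0 < d + 1)) (integrable_id_chiSqMeasure hk)
    (2 * ((d + 1 : ℕ) : ℝ)) (x / ((n : ℝ) - d - 1))
  rw [integral_id_chiSqMeasure hk, hB, div_mul_cancel₀ _ (by rw [← hB]; positivity)] at hlower
  simp_rw [div_mul_eq_mul_div] at hlower
  have htail := exp_neg_le_chiSqMeasure_Ici (k := d + 1) (by omega)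
  push_cast at hlower htail
  have hupper := inv_choose_mul_sq_le_exp_neg hd hdp
  rw [← hinv, one_div, inv_mul_le_iff₀ (by positivity)] at hupper
  nlinarith [exp_pos (-((d : ℝ) + 1))]

theorem EDKhi_geq (p d n : ℕ) (hp : 2 ≤ p) (hd : 0 < d)
    (hdp : (d : ℝ) ≤ Real.exp (-(3 / 2)) * ((p : ℝ) - 1)) (hn : d + 1 < n)
    (x : ℝ) (hx : 0 < x)
    (hinv : (1 / ((d : ℝ) + 1)) *
        (∫ q : ℝ × ℝ, max (q.1 - x * q.2 / ((n : ℝ) - (d : ℝ) - 1)) 0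
          ∂((chiSqMeasure (d + 1)).prod (chiSqMeasure (n - d - 1)))) =
      ((Nat.choose (p - 1) d : ℝ) * ((d : ℝ) + 1) ^ 2)⁻¹) :
    x ≥ (d : ℝ) + 1 :=
  EDKhi_geq_general p d n hd hdp hn x hinv
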